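/- arXiv:2303.00047 — 2 statements merged into one kernel-verified Lean document; each statement's English description precedes it below -/
import Mathlib

section
/- (Combinatorial core of Theorem 1: OnDemCPP eventually terminates, and when it does, it ensures complete coverage.) Let F be a finite set (the obstacle-free cells) and let c, r : ℕ → Finset of cells satisfy the monotonicity, removal, and fresh-reservation invariants. Assume in addition the progress property (in each horizon at least one active robot visits its goal): for every n, if c n ≠ F then either c n ⊊ c (n+1) (a new cell gets covered) or r n \ r (n+1) ≠ ∅ (some reservation is removed). Then there exists N ≤ 2·|F| such that c N = F, i.e., the process reaches complete coverage within 2·|F| horizons. -/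
/-- Combinatorial core of Theorem 1 (OnDemCPP terminates with complete coverage):
given the monotonicity, removal, and fresh-reservation invariants together with the
progress property, the covered set reaches all of `F` within `2 * |F|` horizons. -/
theorem ondemcpp_complete_coverage {α : Type*} [DecidableEq α]
    (F : Finset α) (c r : ℕ → Finset α)
    (hmono : ∀ n, c n ⊆ c (n + 1))
    (hsub : ∀ n, c n ⊆ F)
    (hremoval : ∀ n, ∀ x, x ∈ r n → x ∉ r (n + 1) → x ∈ c (n + 1))
    (hfresh : ∀ n, ∀ x, x ∈ r (n + 1) → x ∉ r n → x ∉ c (n + 1))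
    (hprogress : ∀ n, c n ≠ F → (c n ⊂ c (n + 1) ∨ (r n \ r (n + 1)) ≠ ∅)) :
    ∃ N ≤ 2 * F.card, c N = F := by
  -- the key step: the potential strictly decreases while coverage is incomplete
  have key : ∀ n, c n ≠ F →
      2 * (F \ c (n + 1)).card + ((r (n + 1) ∩ F) ∩ c (n + 1)).card + 1 ≤
      2 * (F \ c n).card + ((r n ∩ F) ∩ c n).card := by
    intro n hne
    -- |F \ c n| = |F \ c (n+1)| + |c (n+1) \ c n|
    have hBk : (F \ c n).card = (F \ c (n + 1)).card + (c (n + 1) \ c n).card := by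
      have h1 : (F \ c (n + 1)) ∪ (c (n + 1) \ c n) = F \ c n := by
        ext x
        simp only [Finset.mem_union, Finset.mem_sdiff]
        constructor
        · rintro (⟨hF, hnc⟩ | ⟨hc1, hnc⟩)
          · exact ⟨hF, fun hx => hnc (hmono n hx)⟩
          · exact ⟨hsub (n + 1) hc1, hnc⟩
        · rintro ⟨hF, hnc⟩
          by_cases hx : x ∈ c (n + 1)
          · exact Or.inr ⟨hx, hnc⟩
          · exact Or.inl ⟨hF, hx⟩
      have hdisj : Disjoint (F \ c (n + 1)) (c (n + 1) \ c n) := by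
        rw [Finset.disjoint_left]
        intro a ha hb
        exact (Finset.mem_sdiff.mp ha).2 (Finset.mem_sdiff.mp hb).1
      rw [← h1, Finset.card_union_of_disjoint hdisj]
    rcases hprogress n hne with hgrow | hrem
    · -- a new cell gets covered
      obtain ⟨x, hx1, hx2⟩ := (Finset.ssubset_iff_of_subset (hmono n)).mp hgrow
      have hA : (r (n + 1) ∩ F) ∩ c (n + 1) ⊆ ((r n ∩ F) ∩ c n) ∪ (c (n + 1) \ c n) := by
        intro y hy
        simp only [Finset.mem_inter, Finset.mem_union, Finset.mem_sdiff] at hy ⊢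
        obtain ⟨⟨hyr, hyF⟩, hyc⟩ := hy
        by_cases hyr0 : y ∈ r n
        · by_cases hyc0 : y ∈ c n
          · exact Or.inl ⟨⟨hyr0, hyF⟩, hyc0⟩
          · exact Or.inr ⟨hyc, hyc0⟩
        · exact absurd hyc (hfresh n y hyr hyr0)
      have hAcard : ((r (n + 1) ∩ F) ∩ c (n + 1)).card ≤
          ((r n ∩ F) ∩ c n).card + (c (n + 1) \ c n).card :=
        le_trans (Finset.card_le_card hA) (Finset.card_union_le _ _)
      have hk : 1 ≤ (c (n + 1) \ c n).card :=
        Finset.card_pos.mpr ⟨x, Finset.mem_sdiff.mpr ⟨hx1, hx2⟩⟩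
      omega
    · -- some reservation is removed; the removed goal is covered at n+1
      obtain ⟨x, hx⟩ := Finset.nonempty_iff_ne_empty.mpr hrem
      rw [Finset.mem_sdiff] at hx
      obtain ⟨hxr, hxr'⟩ := hx
      have hxc : x ∈ c (n + 1) := hremoval n x hxr hxr'
      by_cases hxc0 : x ∈ c n
      · -- the removed goal was already covered: the term |(r∩F)∩c| decreases
        have hxA : x ∈ (r n ∩ F) ∩ c n := by
          simp only [Finset.mem_inter]
          exact ⟨⟨hxr, hsub (n + 1) hxc⟩, hxc0⟩
        have hA : (r (n + 1) ∩ F) ∩ c (n + 1) ⊆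
            (((r n ∩ F) ∩ c n) \ {x}) ∪ (c (n + 1) \ c n) := by
          intro y hy
          simp only [Finset.mem_inter, Finset.mem_union, Finset.mem_sdiff,
            Finset.mem_singleton] at hy ⊢
          obtain ⟨⟨hyr, hyF⟩, hyc⟩ := hy
          have hyx : y ≠ x := fun h => hxr' (h ▸ hyr)
          by_cases hyr0 : y ∈ r n
          · by_cases hyc0 : y ∈ c n
            · exact Or.inl ⟨⟨⟨hyr0, hyF⟩, hyc0⟩, hyx⟩
            · exact Or.inr ⟨hyc, hyc0⟩
          · exact absurd hyc (hfresh n y hyr hyr0)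
        have hsd : (((r n ∩ F) ∩ c n) \ {x}).card = ((r n ∩ F) ∩ c n).card - 1 := by
          rw [Finset.card_sdiff_of_subset (Finset.singleton_subset_iff.mpr hxA), Finset.card_singleton]
        have hApos : 1 ≤ ((r n ∩ F) ∩ c n).card := Finset.card_pos.mpr ⟨x, hxA⟩
        have hAcard : ((r (n + 1) ∩ F) ∩ c (n + 1)).card ≤
            (((r n ∩ F) ∩ c n) \ {x}).card + (c (n + 1) \ c n).card :=
          le_trans (Finset.card_le_card hA) (Finset.card_union_le _ _)
        omega
      · -- the removed goal was newly covered: coverage strictly grows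
        have hA : (r (n + 1) ∩ F) ∩ c (n + 1) ⊆ ((r n ∩ F) ∩ c n) ∪ (c (n + 1) \ c n) := by
          intro y hy
          simp only [Finset.mem_inter, Finset.mem_union, Finset.mem_sdiff] at hy ⊢
          obtain ⟨⟨hyr, hyF⟩, hyc⟩ := hy
          by_cases hyr0 : y ∈ r n
          · by_cases hyc0 : y ∈ c n
            · exact Or.inl ⟨⟨hyr0, hyF⟩, hyc0⟩
            · exact Or.inr ⟨hyc, hyc0⟩
          · exact absurd hyc (hfresh n y hyr hyr0)
        have hAcard : ((r (n + 1) ∩ F) ∩ c (n + 1)).card ≤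
            ((r n ∩ F) ∩ c n).card + (c (n + 1) \ c n).card :=
          le_trans (Finset.card_le_card hA) (Finset.card_union_le _ _)
        have hk : 1 ≤ (c (n + 1) \ c n).card :=
          Finset.card_pos.mpr ⟨x, Finset.mem_sdiff.mpr ⟨hxc, hxc0⟩⟩
        omega
  by_contra hcon
  push_neg at hcon
  have hdec : ∀ n, n ≤ 2 * F.card →
      2 * (F \ c n).card + ((r n ∩ F) ∩ c n).card + n ≤
      2 * (F \ c 0).card + ((r 0 ∩ F) ∩ c 0).card := by
    intro n hn
    induction n with
    | zero => omega
    | succ m ih =>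
      have h1 := key m (hcon m (by omega))
      have h2 := ih (by omega)
      omega
  have h1 : (F \ c 0).card + (c 0).card = F.card := by
    rw [Finset.card_sdiff_of_subset (hsub 0)]
    have := Finset.card_le_card (hsub 0)
    omega
  have h2 : ((r 0 ∩ F) ∩ c 0).card ≤ (c 0).card :=
    Finset.card_le_card Finset.inter_subset_right
  have h3 := hdec (2 * F.card) le_rfl
  have h4 : 1 ≤ (F \ c (2 * F.card)).card := by
    refine Finset.card_pos.mpr (Finset.sdiff_nonempty.mpr fun hsub' => ?_)
    exact hcon (2 * F.card) le_rfl (Finset.Subset.antisymm (hsub _) hsub')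
  omega
end

section
/- (Intermediate claim in the proof of Theorem 1: each goal cell gets reserved at most once.) Let F be a finite set and let c, r : ℕ → Finset of cells satisfy the monotonicity, removal, and fresh-reservation invariants. Then for every cell x and indices n < m, it is impossible that x is newly reserved at both steps n and m; that is, one cannot have both x ∈ r (n+1) \ r n and x ∈ r (m+1) \ r m. Consequently, once a reserved goal is visited (and hence covered), it is never reserved again. -/
/-- Intermediate claim in the proof of Theorem 1: under the monotonicity, removal, and
fresh-reservation invariants, each goal cell gets (freshly) reserved at most once:
no cell `x` can be newly reserved at two distinct steps `n < m`. -/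
theorem ondemcpp_reserved_at_most_once {α : Type*} [DecidableEq α]
    (F : Finset α) (c r : ℕ → Finset α)
    (hmono : ∀ n, c n ⊆ c (n + 1))
    (hsub : ∀ n, c n ⊆ F)
    (hremoval : ∀ n, ∀ x, x ∈ r n → x ∉ r (n + 1) → x ∈ c (n + 1))
    (hfresh : ∀ n, ∀ x, x ∈ r (n + 1) → x ∉ r n → x ∉ c (n + 1)) :
    ∀ (x : α) (n m : ℕ), n < m →
      ¬ (x ∈ r (n + 1) \ r n ∧ x ∈ r (m + 1) \ r m) := by
  intro x n m hnm ⟨hn, hm⟩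
  simp only [Finset.mem_sdiff] at hn hm
  -- once reserved, at any later step x is reserved or covered
  have key : ∀ b, n + 1 ≤ b → x ∈ r b ∨ x ∈ c b := by
    intro b hb
    induction b with
    | zero => omega
    | succ k ih =>
      rcases Nat.lt_or_ge (n + 1) (k + 1) with h | h
      · rcases ih (by omega) with hr | hc
        · by_cases h' : x ∈ r (k + 1)
          · exact Or.inl h'
          · exact Or.inr (hremoval k x hr h')
        · exact Or.inr (hmono k hc)
      · have : n + 1 = k + 1 := le_antisymm hb h
        exact this ▸ Or.inl hn.1
  rcases key m (by omega) with hr | hc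
  · exact hm.2 hr
  · exact hfresh m x hm.1 hm.2 (hmono m hc)
end
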